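/- arXiv:2203.14938 — 8 statements merged into one kernel-verified Lean document; each statement's English description precedes it below -/
import Mathlib

section
/- For the circular tractrix with R>1, the speed of the parametrization satisfies |f'(t)| = |λ sinh(λt)/(c₁/R + cosh(λt))|, where λ = √(R²−1)/R; in particular t=0 is the unique singular (cusp) point. -/
lemma algA (R c₁ h s lam co si d : ℝ) (hR : R ≠ 0) (hd : d ≠ 0)
    (hdef : R * d = c₁ + R * h) (h3 : lam^2 * R^2 = R^2 - 1) :
  (((R - 1/R)*(s*lam))*d - ((R-1/R)*h)*(s*lam))/d^2 * co
    + ((R-1/R)*h/d) * (-si * (1/R))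
    + ((lam*(h*lam))*d - (lam*s)*(s*lam))/d^2 * si
    + (lam*s/d) * (co * (1/R))
  = (lam*s*(c₁+h/R)/d^2) * co + (-(lam^2*s^2)/d^2) * si := by
  field_simp
  linear_combination (d*h*si)*h3 + (R^2*s*lam*co)*hdef

lemma algA2 (R c₁ h s lam co si d : ℝ) (hR : R ≠ 0) (hd : d ≠ 0)
    (hdef : R * d = c₁ + R * h) (h3 : lam^2 * R^2 = R^2 - 1) :
  -((lam*(h*lam))*d - (lam*s)*(s*lam))/d^2 * co
    + (-(lam*s/d)) * (-si * (1/R))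
    + ((((R - 1/R)*(s*lam))*d - ((R-1/R)*h)*(s*lam))/d^2 * si
    + ((R-1/R)*h/d) * (co * (1/R)))
  = -(-(lam^2*s^2)/d^2) * co + (lam*s*(c₁+h/R)/d^2) * si := by
  field_simp
  linear_combination (lam*s*R^2*si)*hdef - (h*d*co)*h3

lemma algK (R c₁ c₂ h s lam co si d : ℝ) (hR : R ≠ 0) (hd : d ≠ 0)
    (hdef : R * d = c₁ + R * h) (h2 : h^2 - s^2 = 1) (h3 : lam^2 * R^2 = R^2 - 1)
    (h4 : c₁^2 + c₂^2 = 1) (hco : co^2 + si^2 = 1) :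
    ((lam*s*(c₁+h/R)/d^2) * co + (-(lam^2*s^2)/d^2) * si)^2
      + (-(-(lam^2*s^2)/d^2) * co + (lam*s*(c₁+h/R)/d^2) * si)^2
      + ((0*d - (lam*c₂)*(s*lam))/d^2)^2
    = (lam*s/d)^2 := by
  field_simp
  linear_combination (lam^2*s^2) * ((2*R*c₁*h + R^2*c₁^2 + h^2 + lam^2*s^2*R^2) * hco
    - (R*d + c₁ + R*h) * hdef + (c₂^2+s^2) * h3 + (R^2-1) * (h4 - h2))
/-- For the circular tractrix with `R > 1`, the speed equals
`|λ sinh (λ t) / (c₁ / R + cosh (λ t))|`, and `t = 0` is the unique singular point. -/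
theorem circular_tractrix_speed
    (R c₁ c₂ lam : ℝ) (hR : 1 < R) (hc : c₁ ^ 2 + c₂ ^ 2 = 1)
    (hlam : lam = Real.sqrt (R ^ 2 - 1) / R)
    (ξ₁ ξ₂ ξ₃ f1 f2 f3 : ℝ → ℝ)
    (hξ₁ : ∀ t, ξ₁ t = (R - 1 / R) * Real.cosh (lam * t) / (c₁ / R + Real.cosh (lam * t)))
    (hξ₂ : ∀ t, ξ₂ t = lam * Real.sinh (lam * t) / (c₁ / R + Real.cosh (lam * t)))
    (hξ₃ : ∀ t, ξ₃ t = lam * c₂ / (c₁ / R + Real.cosh (lam * t)))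
    (hf1 : ∀ t, f1 t = ξ₁ t * Real.cos (t / R) + ξ₂ t * Real.sin (t / R))
    (hf2 : ∀ t, f2 t = -ξ₂ t * Real.cos (t / R) + ξ₁ t * Real.sin (t / R))
    (hf3 : ∀ t, f3 t = ξ₃ t) :
    (∀ t, Real.sqrt ((deriv f1 t) ^ 2 + (deriv f2 t) ^ 2 + (deriv f3 t) ^ 2) =
      |lam * Real.sinh (lam * t) / (c₁ / R + Real.cosh (lam * t))|) ∧
    (∀ t, Real.sqrt ((deriv f1 t) ^ 2 + (deriv f2 t) ^ 2 + (deriv f3 t) ^ 2) = 0 ↔ t = 0) := by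
  have hR0 : (0:ℝ) < R := by linarith
  have hRne : R ≠ 0 := ne_of_gt hR0
  have hlampos : 0 < lam := by
    rw [hlam]; exact div_pos (Real.sqrt_pos.mpr (by nlinarith)) hR0
  have h3 : lam ^ 2 * R ^ 2 = R ^ 2 - 1 := by
    rw [hlam, div_pow, Real.sq_sqrt (by nlinarith : (0:ℝ) ≤ R ^ 2 - 1)]
    field_simp
  have hc1 : -1 ≤ c₁ := by nlinarith [sq_nonneg (c₁ + 1), sq_nonneg c₂]
  have hDpos : ∀ u : ℝ, 0 < c₁ / R + Real.cosh (lam * u) := by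
    intro u
    have h1 : (1:ℝ) ≤ Real.cosh (lam * u) := Real.one_le_cosh _
    have h2 : (-1 : ℝ) / R ≤ c₁ / R := by gcongr
    have h4 : 1 / R < 1 := by rw [div_lt_one hR0]; exact hR
    have h5 : (-1 : ℝ) / R = -(1 / R) := by ring
    linarith [h5 ▸ h2]
  have hf1' : f1 = fun u => (R - 1 / R) * Real.cosh (lam * u) / (c₁ / R + Real.cosh (lam * u)) * Real.cos (u / R)
      + lam * Real.sinh (lam * u) / (c₁ / R + Real.cosh (lam * u)) * Real.sin (u / R) := by
    funext u; rw [hf1, hξ₁, hξ₂]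
  have hf2' : f2 = fun u => -(lam * Real.sinh (lam * u) / (c₁ / R + Real.cosh (lam * u))) * Real.cos (u / R)
      + (R - 1 / R) * Real.cosh (lam * u) / (c₁ / R + Real.cosh (lam * u)) * Real.sin (u / R) := by
    funext u; rw [hf2, hξ₂, hξ₁]
  have hf3' : f3 = fun u => lam * c₂ / (c₁ / R + Real.cosh (lam * u)) := by
    funext u; rw [hf3, hξ₃]
  have main : ∀ t, Real.sqrt ((deriv f1 t) ^ 2 + (deriv f2 t) ^ 2 + (deriv f3 t) ^ 2) =
      |lam * Real.sinh (lam * t) / (c₁ / R + Real.cosh (lam * t))| := by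
    intro t
    set s := Real.sinh (lam * t) with hs
    set h := Real.cosh (lam * t) with hh
    set co := Real.cos (t / R) with hco
    set si := Real.sin (t / R) with hsi
    set d := c₁ / R + h with hd
    have hdne : d ≠ 0 := (hDpos t).ne'
    have hdef : R * d = c₁ + R * h := by rw [hd]; field_simp
    have hlin : HasDerivAt (fun u : ℝ => lam * u) lam t := by
      simpa using (hasDerivAt_id t).const_mul lam
    have hch : HasDerivAt (fun u => Real.cosh (lam * u)) (s * lam) t :=
      (Real.hasDerivAt_cosh (lam * t)).comp t hlin
    have hsh : HasDerivAt (fun u => Real.sinh (lam * u)) (h * lam) t :=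
      (Real.hasDerivAt_sinh (lam * t)).comp t hlin
    have hden : HasDerivAt (fun u => c₁ / R + Real.cosh (lam * u)) (s * lam) t := by
      exact hch.const_add (c₁ / R)
    have hx1 : HasDerivAt (fun u => (R - 1 / R) * Real.cosh (lam * u) / (c₁ / R + Real.cosh (lam * u)))
        ((((R - 1/R) * (s * lam)) * d - ((R - 1/R) * h) * (s * lam)) / d ^ 2) t :=
      (hch.const_mul (R - 1 / R)).div hden hdne
    have hx2 : HasDerivAt (fun u => lam * Real.sinh (lam * u) / (c₁ / R + Real.cosh (lam * u)))
        (((lam * (h * lam)) * d - (lam * s) * (s * lam)) / d ^ 2) t :=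
      (hsh.const_mul lam).div hden hdne
    have hx3 : HasDerivAt (fun u => lam * c₂ / (c₁ / R + Real.cosh (lam * u)))
        ((0 * d - (lam * c₂) * (s * lam)) / d ^ 2) t :=
      (hasDerivAt_const t (lam * c₂)).div hden hdne
    have hdiv : HasDerivAt (fun u : ℝ => u / R) (1 / R) t := by
      simpa using (hasDerivAt_id t).div_const R
    have hcos : HasDerivAt (fun u : ℝ => Real.cos (u / R)) (-si * (1 / R)) t :=
      hdiv.cos
    have hsin : HasDerivAt (fun u : ℝ => Real.sin (u / R)) (co * (1 / R)) t :=
      hdiv.sin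
    have H1 : deriv f1 t = (lam * s * (c₁ + h / R) / d ^ 2) * co + (-(lam ^ 2 * s ^ 2) / d ^ 2) * si := by
      rw [hf1']
      have hder := ((hx1.mul hcos).add (hx2.mul hsin)).deriv
      simp only [Pi.mul_def, Pi.add_def] at hder
      rw [hder]
      have h2 : h ^ 2 - s ^ 2 = 1 := Real.cosh_sq_sub_sinh_sq _
      linear_combination algA R c₁ h s lam co si d hRne hdne hdef h3
    have H2 : deriv f2 t = -(-(lam ^ 2 * s ^ 2) / d ^ 2) * co + (lam * s * (c₁ + h / R) / d ^ 2) * si := by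
      rw [hf2']
      have hder := (((hx2.neg).mul hcos).add (hx1.mul hsin)).deriv
      simp only [Pi.mul_def, Pi.add_def, Pi.neg_def] at hder
      rw [hder]
      linear_combination algA2 R c₁ h s lam co si d hRne hdne hdef h3
    have H3 : deriv f3 t = (0 * d - (lam * c₂) * (s * lam)) / d ^ 2 := by
      rw [hf3']; exact hx3.deriv
    rw [H1, H2, H3,
      algK R c₁ c₂ h s lam co si d hRne hdne hdef (Real.cosh_sq_sub_sinh_sq _) h3 hc
        (Real.cos_sq_add_sin_sq _), Real.sqrt_sq_eq_abs]
  refine ⟨main, fun t => ?_⟩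
  rw [main t, abs_eq_zero, div_eq_zero_iff]
  simp [(hDpos t).ne', hlampos.ne', Real.sinh_eq_zero, mul_eq_zero]
end

section
/- For the circular tractrix with R>1, the position vector satisfies the tractrix relation f(t) + (1/ξ₂(t))·f'(t) = (R cos(t/R), R sin(t/R), 0) for all t with ξ₂(t) ≠ 0; in particular the endpoints of the corresponding unit tangent segments sweep out the circle of radius R centered at the origin in the plane x³=0, parametrized by arc length t. -/
set_option maxHeartbeats 1000000

/-- Tractrix relation for `R > 1`: `f + (1/ξ₂) f' = (R cos (t/R), R sin (t/R), 0)`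
whenever `ξ₂ t ≠ 0`; the directrix is the circle of radius `R` in the plane `x³ = 0`. -/
theorem circular_tractrix_relation
    (R c₁ c₂ lam : ℝ) (hR : 1 < R) (hc : c₁ ^ 2 + c₂ ^ 2 = 1)
    (hlam : lam = Real.sqrt (R ^ 2 - 1) / R)
    (ξ₁ ξ₂ ξ₃ f1 f2 f3 : ℝ → ℝ)
    (hξ₁ : ∀ t, ξ₁ t = (R - 1 / R) * Real.cosh (lam * t) / (c₁ / R + Real.cosh (lam * t)))
    (hξ₂ : ∀ t, ξ₂ t = lam * Real.sinh (lam * t) / (c₁ / R + Real.cosh (lam * t)))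
    (hξ₃ : ∀ t, ξ₃ t = lam * c₂ / (c₁ / R + Real.cosh (lam * t)))
    (hf1 : ∀ t, f1 t = ξ₁ t * Real.cos (t / R) + ξ₂ t * Real.sin (t / R))
    (hf2 : ∀ t, f2 t = -ξ₂ t * Real.cos (t / R) + ξ₁ t * Real.sin (t / R))
    (hf3 : ∀ t, f3 t = ξ₃ t) :
    ∀ t, ξ₂ t ≠ 0 →
      f1 t + (1 / ξ₂ t) * deriv f1 t = R * Real.cos (t / R) ∧
      f2 t + (1 / ξ₂ t) * deriv f2 t = R * Real.sin (t / R) ∧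
      f3 t + (1 / ξ₂ t) * deriv f3 t = 0 := by
  intro t ht
  have hR0 : (0:ℝ) < R := lt_trans one_pos hR
  have hR0' : R ≠ 0 := ne_of_gt hR0
  have hla2 : lam ^ 2 = (R ^ 2 - 1) / R ^ 2 := by
    rw [hlam, div_pow, Real.sq_sqrt (by nlinarith)]
  have hla2' : lam ^ 2 * R ^ 2 = R ^ 2 - 1 := by
    rw [hla2]; field_simp
  have hc1 : -1 ≤ c₁ := by nlinarith [sq_nonneg c₂, sq_nonneg (c₁ + 1)]
  have hD : ∀ s : ℝ, 0 < c₁ / R + Real.cosh (lam * s) := by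
    intro s
    have h1 : (1:ℝ) ≤ Real.cosh (lam * s) := Real.one_le_cosh _
    have h2 : -1 < c₁ / R := by
      rw [lt_div_iff₀ hR0]; nlinarith
    linarith
  have hDt : (c₁ / R + Real.cosh (lam * t)) ≠ 0 := (hD t).ne'
  have hnum : lam * Real.sinh (lam * t) ≠ 0 := by
    intro h
    exact ht (by rw [hξ₂, h, zero_div])
  obtain ⟨hlamne, hSne⟩ := mul_ne_zero_iff.mp hnum
  have hDt2 : c₁ + Real.cosh (lam * t) * R ≠ 0 := by
    have he : c₁ / R + Real.cosh (lam * t) = (c₁ + Real.cosh (lam * t) * R) / R := by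
      field_simp
    rw [he] at hDt
    exact fun h => hDt (by rw [h, zero_div])
  have hlin : HasDerivAt (fun s : ℝ => lam * s) lam t := by
    simpa using (hasDerivAt_id t).const_mul lam
  have hch := hlin.cosh
  have hsh := hlin.sinh
  have hlin2 : HasDerivAt (fun s : ℝ => s / R) (1 / R) t := by
    simpa using (hasDerivAt_id t).div_const R
  have hcos := hlin2.cos
  have hsin := hlin2.sin
  have hDder : HasDerivAt (fun s : ℝ => c₁ / R + Real.cosh (lam * s))
      (Real.sinh (lam * t) * lam) t := hch.const_add _
  have hCS : Real.cosh (lam * t) ^ 2 - Real.sinh (lam * t) ^ 2 = 1 :=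
    Real.cosh_sq_sub_sinh_sq _
  -- f1
  have hf1e : f1 = fun s => ((R - 1 / R) * Real.cosh (lam * s) * Real.cos (s / R)
      + lam * Real.sinh (lam * s) * Real.sin (s / R)) / (c₁ / R + Real.cosh (lam * s)) := by
    funext s
    rw [hf1, hξ₁, hξ₂]
    field_simp
  have hN1 := (((hch.const_mul (R - 1/R)).mul hcos).add ((hsh.const_mul lam).mul hsin))
  have hd1 : deriv f1 t =
      ((((R - 1/R) * lam * Real.sinh (lam * t)) * Real.cos (t / R)
        - ((R - 1/R) / R * Real.cosh (lam * t)) * Real.sin (t / R)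
        + (lam ^ 2 * Real.cosh (lam * t)) * Real.sin (t / R)
        + (lam / R * Real.sinh (lam * t)) * Real.cos (t / R)) * (c₁ / R + Real.cosh (lam * t))
        - ((R - 1/R) * Real.cosh (lam * t) * Real.cos (t / R)
            + lam * Real.sinh (lam * t) * Real.sin (t / R)) * (Real.sinh (lam * t) * lam))
        / (c₁ / R + Real.cosh (lam * t)) ^ 2 := by
    rw [hf1e]; refine ((hN1.div hDder hDt).deriv).trans ?_; simp only [Pi.add_apply, Pi.mul_apply, Pi.neg_apply]
    ring
  -- f2
  have hf2e : f2 = fun s => (-(lam * Real.sinh (lam * s)) * Real.cos (s / R)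
      + (R - 1 / R) * Real.cosh (lam * s) * Real.sin (s / R)) / (c₁ / R + Real.cosh (lam * s)) := by
    funext s
    rw [hf2, hξ₁, hξ₂]
    field_simp
  have hN2 := ((((hsh.const_mul lam).neg).mul hcos).add ((hch.const_mul (R - 1/R)).mul hsin))
  have hd2 : deriv f2 t =
      ((-(lam ^ 2 * Real.cosh (lam * t)) * Real.cos (t / R)
        + (lam / R * Real.sinh (lam * t)) * Real.sin (t / R)
        + ((R - 1/R) * lam * Real.sinh (lam * t)) * Real.sin (t / R)
        + ((R - 1/R) / R * Real.cosh (lam * t)) * Real.cos (t / R)) * (c₁ / R + Real.cosh (lam * t))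
        - (-(lam * Real.sinh (lam * t)) * Real.cos (t / R)
            + (R - 1/R) * Real.cosh (lam * t) * Real.sin (t / R)) * (Real.sinh (lam * t) * lam))
        / (c₁ / R + Real.cosh (lam * t)) ^ 2 := by
    rw [hf2e]; refine ((hN2.div hDder hDt).deriv).trans ?_; simp only [Pi.add_apply, Pi.mul_apply, Pi.neg_apply]
    ring
  -- f3
  have hf3e : f3 = fun s => lam * c₂ / (c₁ / R + Real.cosh (lam * s)) := by
    funext s; rw [hf3, hξ₃]
  have hd3 : deriv f3 t = (0 * (c₁ / R + Real.cosh (lam * t))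
      - lam * c₂ * (Real.sinh (lam * t) * lam)) / (c₁ / R + Real.cosh (lam * t)) ^ 2 := by
    rw [hf3e]
    exact ((hasDerivAt_const t (lam * c₂)).div hDder hDt).deriv
  refine ⟨?_, ?_, ?_⟩
  · rw [hf1, hξ₁, hξ₂, hd1]
    set C := Real.cosh (lam * t) with hC
    set S := Real.sinh (lam * t) with hS
    set co := Real.cos (t / R) with hco
    set si := Real.sin (t / R) with hsi
    clear_value C S co si
    have hDt3 : R * C + c₁ ≠ 0 := by rw [mul_comm, add_comm]; exact hDt2
    field_simp [hDt3, hlamne, hSne]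
    rw [div_eq_iff (by rw [add_comm]; exact hDt3)]
    linear_combination (c₁ + R*C)*C*si*hla2'
  · rw [hf2, hξ₁, hξ₂, hd2]
    set C := Real.cosh (lam * t) with hC
    set S := Real.sinh (lam * t) with hS
    set co := Real.cos (t / R) with hco
    set si := Real.sin (t / R) with hsi
    clear_value C S co si
    have hDt3 : R * C + c₁ ≠ 0 := by rw [mul_comm, add_comm]; exact hDt2
    field_simp [hDt3, hlamne, hSne]
    rw [div_eq_iff (by rw [add_comm]; exact hDt3)]
    linear_combination -(c₁ + R*C)*C*co*hla2'
  · rw [hf3, hξ₃, hξ₂, hd3, one_div_div]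
    field_simp [hDt2, hlamne, hSne]
    ring
end

section
/- The tangent segment in the tractrix relation has unit length: for the circular tractrix with R>1, |f(t) − (R cos(t/R), R sin(t/R), 0)| = 1 for all t, i.e., the distance from every point of the circular tractrix to the corresponding point of the directrix circle is exactly 1. -/
/-- Every point of the circular tractrix with `R > 1` is at distance exactly `1` from the
corresponding point of the directrix circle. -/
theorem circular_tractrix_unit_segment
    (R c₁ c₂ lam : ℝ) (hR : 1 < R) (hc : c₁ ^ 2 + c₂ ^ 2 = 1)
    (hlam : lam = Real.sqrt (R ^ 2 - 1) / R)
    (ξ₁ ξ₂ ξ₃ f1 f2 f3 : ℝ → ℝ)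
    (hξ₁ : ∀ t, ξ₁ t = (R - 1 / R) * Real.cosh (lam * t) / (c₁ / R + Real.cosh (lam * t)))
    (hξ₂ : ∀ t, ξ₂ t = lam * Real.sinh (lam * t) / (c₁ / R + Real.cosh (lam * t)))
    (hξ₃ : ∀ t, ξ₃ t = lam * c₂ / (c₁ / R + Real.cosh (lam * t)))
    (hf1 : ∀ t, f1 t = ξ₁ t * Real.cos (t / R) + ξ₂ t * Real.sin (t / R))
    (hf2 : ∀ t, f2 t = -ξ₂ t * Real.cos (t / R) + ξ₁ t * Real.sin (t / R))
    (hf3 : ∀ t, f3 t = ξ₃ t) :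
    ∀ t, Real.sqrt ((f1 t - R * Real.cos (t / R)) ^ 2 +
      (f2 t - R * Real.sin (t / R)) ^ 2 + (f3 t) ^ 2) = 1 := by
  intro t
  have hR0 : (0:ℝ) < R := by linarith
  have hlam2 : lam ^ 2 = (R ^ 2 - 1) / R ^ 2 := by
    rw [hlam, div_pow, Real.sq_sqrt (by nlinarith : (0:ℝ) ≤ R ^ 2 - 1)]
  have hch : 1 ≤ Real.cosh (lam * t) := Real.one_le_cosh _
  have hD : 0 < c₁ / R + Real.cosh (lam * t) := by
    have h1 : -1 ≤ c₁ := by nlinarith [sq_nonneg c₂, sq_nonneg (c₁ + 1)]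
    have h2 : -1 < c₁ / R := by
      rw [lt_div_iff₀ hR0]; nlinarith
    linarith
  have hcs : Real.cos (t / R) ^ 2 + Real.sin (t / R) ^ 2 = 1 := by
    rw [add_comm]; exact Real.sin_sq_add_cos_sq _
  have hsinh : Real.sinh (lam * t) ^ 2 = Real.cosh (lam * t) ^ 2 - 1 := by
    have := Real.cosh_sq (lam * t); linarith
  have step1 : (f1 t - R * Real.cos (t / R)) ^ 2 +
      (f2 t - R * Real.sin (t / R)) ^ 2 + (f3 t) ^ 2
      = (ξ₁ t - R) ^ 2 + (ξ₂ t) ^ 2 + (ξ₃ t) ^ 2 := by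
    rw [hf1, hf2, hf3]
    linear_combination ((ξ₁ t - R) ^ 2 + (ξ₂ t) ^ 2) * hcs
  have hmul : (c₁ / R + Real.cosh (lam * t)) * R = c₁ + Real.cosh (lam * t) * R := by
    field_simp
  have hD' : (0:ℝ) < c₁ + Real.cosh (lam * t) * R := by
    rw [← hmul]; exact mul_pos hD hR0
  have hlam2' : lam ^ 2 * R ^ 2 = R ^ 2 - 1 := by
    rw [hlam2]; field_simp
  have e1 : ξ₁ t - R = (-(c₁ + Real.cosh (lam * t) / R)) / (c₁ / R + Real.cosh (lam * t)) := by
    rw [hξ₁, eq_div_iff hD.ne']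
    field_simp [show c₁ + R * Real.cosh (lam * t) ≠ 0 by rw [mul_comm]; exact hD'.ne']
    ring
  have step2 : (ξ₁ t - R) ^ 2 + (ξ₂ t) ^ 2 + (ξ₃ t) ^ 2 = 1 := by
    rw [e1, hξ₂, hξ₃]
    field_simp
    linear_combination (Real.sinh (lam * t) ^ 2 + c₂ ^ 2) * hlam2' +
      (R ^ 2 - 1) * hsinh + (R ^ 2 - 1) * hc
  rw [step1, step2, Real.sqrt_one]
end

section
/- For the circular tractrix with R>1 and c₁ = cos α, c₂ = sin α, the shifted curve satisfies lim_{R→+∞} (f¹(t) − R, f²(t), f³(t)) = (−cos α / cosh t, t − tanh t, sin α / cosh t) pointwise in t, i.e., the circular tractrix converges to the classical linear tractrix rotated by angle α around its asymptotic line. -/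
open Filter

lemma aux_slope_lim (t : ℝ) (g : ℝ → ℝ) (g' : ℝ) (h0 : g 0 = 0)
    (hd : HasDerivAt g g' 0) :
    Tendsto (fun R : ℝ => R * g (t / R)) atTop (nhds (t * g')) := by
  rcases eq_or_ne t 0 with rfl | ht
  · simp [h0]
  · have ht0 : Tendsto (fun R : ℝ => t / R) atTop (nhds 0) :=
      tendsto_const_nhds.div_atTop tendsto_id
    have hcomp : Tendsto (fun R : ℝ => t / R) atTop (nhdsWithin 0 {(0:ℝ)}ᶜ) := by
      refine tendsto_nhdsWithin_iff.mpr ⟨ht0, ?_⟩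
      filter_upwards [eventually_gt_atTop (0:ℝ)] with R hR
      exact div_ne_zero ht hR.ne'
    have hslope := hasDerivAt_iff_tendsto_slope.mp hd
    have htend : Tendsto (fun R : ℝ => t * slope g 0 (t / R)) atTop (nhds (t * g')) :=
      ((hslope.comp hcomp).const_mul t)
    refine htend.congr' ?_
    filter_upwards [eventually_gt_atTop (0:ℝ)] with R hR
    rw [slope_def_field, h0]
    field_simp
    field_simp [ht]
    ring

/-- As `R → +∞`, the shifted circular tractrix (with `c₁ = cos α`, `c₂ = sin α`)
converges pointwise to the classical linear tractrix rotated by angle `α`. -/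
theorem circular_tractrix_limit_linear (α : ℝ) (t : ℝ) :
    Tendsto (fun R : ℝ =>
        ((R - 1 / R) * Real.cosh (Real.sqrt (R ^ 2 - 1) / R * t) /
            (Real.cos α / R + Real.cosh (Real.sqrt (R ^ 2 - 1) / R * t)) * Real.cos (t / R) +
          Real.sqrt (R ^ 2 - 1) / R * Real.sinh (Real.sqrt (R ^ 2 - 1) / R * t) /
            (Real.cos α / R + Real.cosh (Real.sqrt (R ^ 2 - 1) / R * t)) * Real.sin (t / R)) - R)
      atTop (nhds (-Real.cos α / Real.cosh t)) ∧
    Tendsto (fun R : ℝ =>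
        -(Real.sqrt (R ^ 2 - 1) / R * Real.sinh (Real.sqrt (R ^ 2 - 1) / R * t) /
            (Real.cos α / R + Real.cosh (Real.sqrt (R ^ 2 - 1) / R * t))) * Real.cos (t / R) +
          (R - 1 / R) * Real.cosh (Real.sqrt (R ^ 2 - 1) / R * t) /
            (Real.cos α / R + Real.cosh (Real.sqrt (R ^ 2 - 1) / R * t)) * Real.sin (t / R))
      atTop (nhds (t - Real.tanh t)) ∧
    Tendsto (fun R : ℝ =>
        Real.sqrt (R ^ 2 - 1) / R * Real.sin α /
          (Real.cos α / R + Real.cosh (Real.sqrt (R ^ 2 - 1) / R * t)))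
      atTop (nhds (Real.sin α / Real.cosh t)) := by
  set lam : ℝ → ℝ := fun R => Real.sqrt (R ^ 2 - 1) / R with hlamdef
  set D : ℝ → ℝ := fun R => Real.cos α / R + Real.cosh (lam R * t) with hDdef
  -- lam → 1
  have hinv : Tendsto (fun R : ℝ => 1 / R) atTop (nhds 0) :=
    tendsto_const_nhds.div_atTop tendsto_id
  have hlam : Tendsto lam atTop (nhds 1) := by
    have h1 : Tendsto (fun R : ℝ => Real.sqrt (1 - (1 / R) ^ 2)) atTop (nhds 1) := by
      have : Tendsto (fun R : ℝ => 1 - (1 / R) ^ 2) atTop (nhds (1 - 0 ^ 2)) :=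
        tendsto_const_nhds.sub (hinv.pow 2)
      have h2 := (Real.continuous_sqrt.tendsto (1 - 0 ^ 2)).comp this
      simpa [Function.comp_def] using h2
    refine h1.congr' ?_
    filter_upwards [eventually_ge_atTop (1:ℝ)] with R hR
    have hR0 : (0:ℝ) < R := lt_of_lt_of_le one_pos hR
    have h1R : (1:ℝ) ≤ R ^ 2 := by nlinarith
    have : 1 - (1 / R) ^ 2 = (R ^ 2 - 1) / R ^ 2 := by field_simp
    rw [this, Real.sqrt_div (by linarith) (R ^ 2), Real.sqrt_sq hR0.le, hlamdef]
  have hlt : Tendsto (fun R : ℝ => lam R * t) atTop (nhds t) := by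
    simpa using hlam.mul_const t
  have ht0 : Tendsto (fun R : ℝ => t / R) atTop (nhds 0) :=
    tendsto_const_nhds.div_atTop tendsto_id
  have hcosh : Tendsto (fun R : ℝ => Real.cosh (lam R * t)) atTop (nhds (Real.cosh t)) :=
    (Real.continuous_cosh.tendsto t).comp hlt
  have hsinh : Tendsto (fun R : ℝ => Real.sinh (lam R * t)) atTop (nhds (Real.sinh t)) :=
    (Real.continuous_sinh.tendsto t).comp hlt
  have hcos : Tendsto (fun R : ℝ => Real.cos (t / R)) atTop (nhds 1) := by
    simpa [Function.comp_def] using (Real.continuous_cos.tendsto 0).comp ht0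
  have hsin : Tendsto (fun R : ℝ => Real.sin (t / R)) atTop (nhds 0) := by
    simpa [Function.comp_def] using (Real.continuous_sin.tendsto 0).comp ht0
  have hcα : Tendsto (fun R : ℝ => Real.cos α / R) atTop (nhds 0) :=
    tendsto_const_nhds.div_atTop tendsto_id
  have hD : Tendsto D atTop (nhds (Real.cosh t)) := by
    simpa using hcα.add hcosh
  have hDne : Real.cosh t ≠ 0 := (Real.cosh_pos t).ne'
  -- D is eventually positive
  have hDpos : ∀ᶠ R : ℝ in atTop, 0 < D R := by
    filter_upwards [eventually_gt_atTop (1:ℝ)] with R hR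
    have hR0 : (0:ℝ) < R := lt_trans one_pos hR
    have h1 : -1 < Real.cos α / R := by
      rw [lt_div_iff₀ hR0]
      nlinarith [Real.neg_one_le_cos α]
    have h2 := Real.one_le_cosh (lam R * t)
    simp only [hDdef]
    linarith
  -- R sin(t/R) → t ,  R(cos(t/R)-1) → 0
  have hRsin : Tendsto (fun R : ℝ => R * Real.sin (t / R)) atTop (nhds t) := by
    have hd : HasDerivAt Real.sin 1 0 := by simpa using Real.hasDerivAt_sin 0
    simpa using aux_slope_lim t Real.sin 1 Real.sin_zero hd
  have hRcos : Tendsto (fun R : ℝ => R * (Real.cos (t / R) - 1)) atTop (nhds 0) := by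
    have hd : HasDerivAt (fun x : ℝ => Real.cos x - 1) 0 0 := by
      simpa using (Real.hasDerivAt_cos 0).sub_const 1
    simpa using aux_slope_lim t (fun x => Real.cos x - 1) 0 (by simp) hd
  refine ⟨?_, ?_, ?_⟩
  · -- first component
    have H : Tendsto (fun R : ℝ =>
        (R * (Real.cos (t / R) - 1) * Real.cosh (lam R * t)
          - Real.cosh (lam R * t) * Real.cos (t / R) * (1 / R) - Real.cos α) / D R
        + lam R * Real.sinh (lam R * t) / D R * Real.sin (t / R)) atTop
        (nhds ((0 * Real.cosh t - Real.cosh t * 1 * 0 - Real.cos α) / Real.cosh t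
          + 1 * Real.sinh t / Real.cosh t * 0)) := by
      exact ((((hRcos.mul hcosh).sub ((hcosh.mul hcos).mul hinv)).sub
        tendsto_const_nhds).div hD hDne).add
        (((hlam.mul hsinh).div hD hDne).mul hsin)
    have hval : (0 * Real.cosh t - Real.cosh t * 1 * 0 - Real.cos α) / Real.cosh t
        + 1 * Real.sinh t / Real.cosh t * 0 = -Real.cos α / Real.cosh t := by ring
    rw [hval] at H
    refine H.congr' ?_
    filter_upwards [hDpos, eventually_gt_atTop (1:ℝ)] with R hDR hR
    have hR0 : R ≠ 0 := by positivity
    have hDne' : D R ≠ 0 := hDR.ne'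
    show _ = (R - 1 / R) * Real.cosh (lam R * t) / D R * Real.cos (t / R)
        + lam R * Real.sinh (lam R * t) / D R * Real.sin (t / R) - R
    simp only [hDdef] at hDne' ⊢
    set c := Real.cosh (lam R * t) with hc
    set s2 := Real.sinh (lam R * t) with hs2
    set L := lam R with hL
    set co := Real.cos (t / R) with hco
    set si := Real.sin (t / R) with hsi
    set ca := Real.cos α with hca
    have h3 : R * c + ca ≠ 0 := by
      intro h
      apply hDne'
      field_simp
      linarith [h]
    field_simp
    linear_combination (-R) * mul_inv_cancel₀ h3
  · -- second component
    have H : Tendsto (fun R : ℝ =>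
        -(lam R * Real.sinh (lam R * t) / D R) * Real.cos (t / R)
        + (R * Real.sin (t / R) - Real.sin (t / R) * (1 / R)) * Real.cosh (lam R * t) / D R)
        atTop (nhds (-(1 * Real.sinh t / Real.cosh t) * 1
          + (t - 0 * 0) * Real.cosh t / Real.cosh t)) := by
      exact ((((hlam.mul hsinh).div hD hDne).neg.mul hcos).add
        (((hRsin.sub (hsin.mul hinv)).mul hcosh).div hD hDne))
    have hval : -(1 * Real.sinh t / Real.cosh t) * 1
        + (t - 0 * 0) * Real.cosh t / Real.cosh t = t - Real.tanh t := by
      rw [Real.tanh_eq_sinh_div_cosh]; field_simp; ring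
    rw [hval] at H
    refine H.congr' ?_
    filter_upwards [eventually_gt_atTop (1:ℝ)] with R hR
    have hR0 : R ≠ 0 := by positivity
    show _ = -(lam R * Real.sinh (lam R * t) / D R) * Real.cos (t / R)
        + (R - 1 / R) * Real.cosh (lam R * t) / D R * Real.sin (t / R)
    simp only [hDdef]
    set c := Real.cosh (lam R * t) with hc
    set s2 := Real.sinh (lam R * t) with hs2
    set L := lam R with hL
    set co := Real.cos (t / R) with hco
    set si := Real.sin (t / R) with hsi
    set ca := Real.cos α with hca
    congr 1
    rw [div_mul_eq_mul_div]
    congr 1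
    ring
  · -- third component
    have H := (hlam.mul_const (Real.sin α)).div hD hDne
    simpa [Pi.div_def, hlamdef, hDdef] using H
end

section
/- For every R>1, the total area of the circular pseudosphere equals 4π: 2∫₀^∞ ∫₀^{2π} (R²−1) sinh(λt)/(cos α + R cosh(λt))² dα dt = 4π, where λ = √(R²−1)/R. In particular the area is independent of R and equals the area of the classical pseudosphere. -/
open MeasureTheory Filter

theorem aux_t_integrableOn (R lam c : ℝ) (hR : 1 < R) (hlam : 0 < lam) (hc : -1 ≤ c) :
    IntegrableOn (fun t => (R ^ 2 - 1) * Real.sinh (lam * t) / (c + R * Real.cosh (lam * t)) ^ 2)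
      (Set.Ioi (0:ℝ)) := by
  have hne : ∀ t : ℝ, c + R * Real.cosh (lam * t) ≠ 0 := by
    intro t; nlinarith [Real.one_le_cosh (lam * t)]
  have hd : ∀ t : ℝ, HasDerivAt (fun t => c + R * Real.cosh (lam * t))
      (R * (Real.sinh (lam * t) * lam)) t := by
    intro t
    have h1 : HasDerivAt (fun t : ℝ => lam * t) lam t := by
      simpa using (hasDerivAt_id t).const_mul lam
    exact (((Real.hasDerivAt_cosh (lam * t)).comp t h1).const_mul R).const_add c
  have hg : ∀ t : ℝ, HasDerivAt
      (fun t => -((R ^ 2 - 1) / (lam * R)) * (c + R * Real.cosh (lam * t))⁻¹)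
      ((R ^ 2 - 1) * Real.sinh (lam * t) / (c + R * Real.cosh (lam * t)) ^ 2) t := by
    intro t
    have h2 := ((hd t).inv (hne t)).const_mul (-((R ^ 2 - 1) / (lam * R)))
    refine h2.congr_deriv (Eq.symm ?_)
    have h0 := hne t
    have hl : lam ≠ 0 := ne_of_gt hlam
    have hr : R ≠ 0 := by positivity
    field_simp
  have hpos : ∀ t ∈ Set.Ioi (0:ℝ),
      0 ≤ (R ^ 2 - 1) * Real.sinh (lam * t) / (c + R * Real.cosh (lam * t)) ^ 2 := by
    intro t ht
    have h1 : 0 ≤ Real.sinh (lam * t) := Real.sinh_nonneg_iff.2 (mul_nonneg hlam.le (le_of_lt ht))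
    have h2 : (0:ℝ) ≤ R ^ 2 - 1 := by nlinarith
    exact div_nonneg (mul_nonneg h2 h1) (sq_nonneg _)
  have htend : Tendsto (fun t => -((R ^ 2 - 1) / (lam * R)) * (c + R * Real.cosh (lam * t))⁻¹)
      atTop (nhds 0) := by
    have h1 : Tendsto (fun t : ℝ => lam * t) atTop atTop :=
      (tendsto_id (α := ℝ)).const_mul_atTop hlam
    have h2 : Tendsto (fun t : ℝ => c + R * Real.cosh (lam * t)) atTop atTop := by
      apply tendsto_atTop_add_const_left
      have hcosh : Tendsto Real.cosh atTop atTop := by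
        apply tendsto_atTop_mono (fun x => ?_) (Real.tendsto_exp_atTop.atTop_div_const two_pos)
        rw [Real.cosh_eq]
        have := Real.exp_pos (-x)
        linarith
      exact (hcosh.comp h1).const_mul_atTop (by linarith)
    have h3 := h2.inv_tendsto_atTop
    have := h3.const_mul (-((R ^ 2 - 1) / (lam * R)))
    simpa using this
  exact integrableOn_Ioi_deriv_of_nonneg' (fun t _ => hg t) hpos htend

theorem aux_t_integral (R lam c : ℝ) (hR : 1 < R) (hlam : 0 < lam) (hc : -1 ≤ c) :
    (∫ t in Set.Ioi (0:ℝ),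
        (R ^ 2 - 1) * Real.sinh (lam * t) / (c + R * Real.cosh (lam * t)) ^ 2)
      = (R ^ 2 - 1) / (lam * R) * (R + c)⁻¹ := by
  have hne : ∀ t : ℝ, c + R * Real.cosh (lam * t) ≠ 0 := by
    intro t; nlinarith [Real.one_le_cosh (lam * t)]
  have hd : ∀ t : ℝ, HasDerivAt (fun t => c + R * Real.cosh (lam * t))
      (R * (Real.sinh (lam * t) * lam)) t := by
    intro t
    have h1 : HasDerivAt (fun t : ℝ => lam * t) lam t := by
      simpa using (hasDerivAt_id t).const_mul lam
    exact (((Real.hasDerivAt_cosh (lam * t)).comp t h1).const_mul R).const_add c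
  have hg : ∀ t : ℝ, HasDerivAt
      (fun t => -((R ^ 2 - 1) / (lam * R)) * (c + R * Real.cosh (lam * t))⁻¹)
      ((R ^ 2 - 1) * Real.sinh (lam * t) / (c + R * Real.cosh (lam * t)) ^ 2) t := by
    intro t
    have h2 := ((hd t).inv (hne t)).const_mul (-((R ^ 2 - 1) / (lam * R)))
    refine h2.congr_deriv (Eq.symm ?_)
    have h0 := hne t
    have hl : lam ≠ 0 := ne_of_gt hlam
    have hr : R ≠ 0 := by positivity
    field_simp
  have hpos : ∀ t ∈ Set.Ioi (0:ℝ),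
      0 ≤ (R ^ 2 - 1) * Real.sinh (lam * t) / (c + R * Real.cosh (lam * t)) ^ 2 := by
    intro t ht
    have h1 : 0 ≤ Real.sinh (lam * t) := Real.sinh_nonneg_iff.2 (mul_nonneg hlam.le (le_of_lt ht))
    have h2 : (0:ℝ) ≤ R ^ 2 - 1 := by nlinarith
    exact div_nonneg (mul_nonneg h2 h1) (sq_nonneg _)
  have htend : Tendsto (fun t => -((R ^ 2 - 1) / (lam * R)) * (c + R * Real.cosh (lam * t))⁻¹)
      atTop (nhds 0) := by
    have h1 : Tendsto (fun t : ℝ => lam * t) atTop atTop :=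
      (tendsto_id (α := ℝ)).const_mul_atTop hlam
    have h2 : Tendsto (fun t : ℝ => c + R * Real.cosh (lam * t)) atTop atTop := by
      apply tendsto_atTop_add_const_left
      have hcosh : Tendsto Real.cosh atTop atTop := by
        apply tendsto_atTop_mono (fun x => ?_) (Real.tendsto_exp_atTop.atTop_div_const two_pos)
        rw [Real.cosh_eq]
        have := Real.exp_pos (-x)
        linarith
      exact (hcosh.comp h1).const_mul_atTop (by linarith)
    have h3 := h2.inv_tendsto_atTop
    have := h3.const_mul (-((R ^ 2 - 1) / (lam * R)))
    simpa using this
  rw [integral_Ioi_of_hasDerivAt_of_nonneg' (fun t _ => hg t) hpos htend]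
  simp only [mul_zero, Real.cosh_zero, mul_one, zero_sub, neg_mul, neg_neg]
  rw [add_comm c R]

theorem aux_cos_integral (b s : ℝ) (hb : 1 < b) (hs : s ^ 2 = b ^ 2 - 1) (hsp : 0 < s) :
    ∫ α in (0:ℝ)..(2 * Real.pi), (b + Real.cos α)⁻¹ = 2 * Real.pi / s := by
  set k := b - s with hk
  have hsb : s < b := by nlinarith
  have hkpos : 0 < k := by simp [hk]; linarith
  have hk1 : k < 1 := by nlinarith
  have hvpos : ∀ α : ℝ, 0 < 1 + k * Real.cos α := by
    intro α
    nlinarith [Real.neg_one_le_cos α, Real.cos_le_one α]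
  have hbc : ∀ α : ℝ, 0 < b + Real.cos α := by
    intro α; nlinarith [Real.neg_one_le_cos α]
  have h1k : 1 - k ^ 2 = 2 * s * k := by simp only [hk]; nlinarith
  have h2k : 1 + k ^ 2 = 2 * b * k := by simp only [hk]; nlinarith
  have hH : ∀ α : ℝ, HasDerivAt
      (fun α => (α - 2 * Real.arctan (k * Real.sin α / (1 + k * Real.cos α))) / s)
      (b + Real.cos α)⁻¹ α := by
    intro α
    have hvne : 1 + k * Real.cos α ≠ 0 := ne_of_gt (hvpos α)
    have hu : HasDerivAt (fun α : ℝ => k * Real.sin α) (k * Real.cos α) α :=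
      (Real.hasDerivAt_sin α).const_mul k
    have hv : HasDerivAt (fun α : ℝ => 1 + k * Real.cos α) (k * -Real.sin α) α :=
      ((Real.hasDerivAt_cos α).const_mul k).const_add 1
    have hq := hu.div hv hvne
    have harc := (Real.hasDerivAt_arctan (k * Real.sin α / (1 + k * Real.cos α))).comp α hq
    have hfull := ((hasDerivAt_id α).sub (harc.const_mul 2)).div_const s
    refine hfull.congr_deriv (Eq.symm ?_)
    have hbcne : b + Real.cos α ≠ 0 := ne_of_gt (hbc α)
    have hsne : s ≠ 0 := ne_of_gt hsp
    have h1q : 1 + (k * Real.sin α / (1 + k * Real.cos α)) ^ 2 ≠ 0 := by positivity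
    have hvne' : 1 + Real.cos α * k ≠ 0 := by rw [mul_comm]; exact hvne
    field_simp
    linear_combination s * h2k
      - (b + Real.cos α) * h1k
      + k ^ 2 * (s + b + Real.cos α) * (Real.sin_sq_add_cos_sq α)
  have hcont : Continuous fun α : ℝ => (b + Real.cos α)⁻¹ := by
    apply Continuous.inv₀ (by continuity)
    intro α; exact ne_of_gt (hbc α)
  rw [intervalIntegral.integral_eq_sub_of_hasDerivAt (fun α _ => hH α)
    (hcont.intervalIntegrable _ _)]
  simp [Real.sin_two_pi, Real.cos_two_pi]

/-- For every `R > 1`, the total area of the circular pseudosphere equals `4π`. -/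
theorem circular_pseudosphere_area (R lam : ℝ) (hR : 1 < R)
    (hlam : lam = Real.sqrt (R ^ 2 - 1) / R) :
    2 * ∫ t in Set.Ioi (0 : ℝ), (∫ α in (0 : ℝ)..(2 * Real.pi),
        (R ^ 2 - 1) * Real.sinh (lam * t) / (Real.cos α + R * Real.cosh (lam * t)) ^ 2) =
      4 * Real.pi := by
  have hR1 : (0:ℝ) < R ^ 2 - 1 := by nlinarith
  set s := Real.sqrt (R ^ 2 - 1) with hsdef
  have hs2 : s ^ 2 = R ^ 2 - 1 := Real.sq_sqrt hR1.le
  have hsp : 0 < s := Real.sqrt_pos.2 hR1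
  have hlamp : 0 < lam := by rw [hlam]; positivity
  have hlR : lam * R = s := by rw [hlam]; field_simp
  have h2pi : (0:ℝ) ≤ 2 * Real.pi := by positivity
  have hden : ∀ p : ℝ × ℝ, Real.cos p.2 + R * Real.cosh (lam * p.1) ≠ 0 := by
    intro p
    nlinarith [Real.one_le_cosh (lam * p.1), Real.neg_one_le_cos p.2]
  have hcontf : Continuous (Function.uncurry fun t α : ℝ =>
      (R ^ 2 - 1) * Real.sinh (lam * t) / (Real.cos α + R * Real.cosh (lam * t)) ^ 2) := by
    have hnum : Continuous fun p : ℝ × ℝ => (R ^ 2 - 1) * Real.sinh (lam * p.1) :=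
      continuous_const.mul (Real.continuous_sinh.comp (continuous_const.mul continuous_fst))
    have hdenc : Continuous fun p : ℝ × ℝ =>
        (Real.cos p.2 + R * Real.cosh (lam * p.1)) ^ 2 :=
      ((Real.continuous_cos.comp continuous_snd).add
        (continuous_const.mul (Real.continuous_cosh.comp (continuous_const.mul continuous_fst)))).pow 2
    exact hnum.div hdenc fun p => pow_ne_zero 2 (hden p)
  have hnn : ∀ (α : ℝ), ∀ t ∈ Set.Ioi (0:ℝ),
      0 ≤ (R ^ 2 - 1) * Real.sinh (lam * t) / (Real.cos α + R * Real.cosh (lam * t)) ^ 2 := by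
    intro α t ht
    have h1 : 0 ≤ Real.sinh (lam * t) := Real.sinh_nonneg_iff.2 (mul_nonneg hlamp.le ht.out.le)
    exact div_nonneg (mul_nonneg hR1.le h1) (sq_nonneg _)
  have hta : ∀ α : ℝ, (∫ t in Set.Ioi (0:ℝ),
      (R ^ 2 - 1) * Real.sinh (lam * t) / (Real.cos α + R * Real.cosh (lam * t)) ^ 2)
      = (R ^ 2 - 1) / (lam * R) * (R + Real.cos α)⁻¹ := fun α =>
    aux_t_integral R lam (Real.cos α) hR hlamp (Real.neg_one_le_cos α)
  have hint : Integrable (Function.uncurry fun t α : ℝ =>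
      (R ^ 2 - 1) * Real.sinh (lam * t) / (Real.cos α + R * Real.cosh (lam * t)) ^ 2)
      ((volume.restrict (Set.Ioi 0)).prod (volume.restrict (Set.Ioc 0 (2 * Real.pi)))) := by
    rw [integrable_prod_iff' hcontf.aestronglyMeasurable]
    constructor
    · exact Eventually.of_forall fun α =>
        aux_t_integrableOn R lam (Real.cos α) hR hlamp (Real.neg_one_le_cos α)
    · have heq : ∀ α : ℝ, (∫ t in Set.Ioi (0:ℝ),
          ‖(R ^ 2 - 1) * Real.sinh (lam * t) / (Real.cos α + R * Real.cosh (lam * t)) ^ 2‖)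
          = (R ^ 2 - 1) / (lam * R) * (R + Real.cos α)⁻¹ := by
        intro α
        rw [← hta α]
        apply setIntegral_congr_fun measurableSet_Ioi
        intro t ht
        exact Real.norm_of_nonneg (hnn α t ht)
      simp only [Function.uncurry]
      simp only [heq]
      apply Continuous.integrableOn_Ioc
      apply Continuous.mul continuous_const
      apply Continuous.inv₀ (continuous_const.add Real.continuous_cos)
      intro α
      nlinarith [Real.neg_one_le_cos α, show ((fun _ : ℝ => R) + Real.cos) α = R + Real.cos α from rfl]
  simp_rw [intervalIntegral.integral_of_le h2pi]
  rw [integral_integral_swap hint]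
  simp_rw [hta]
  rw [← intervalIntegral.integral_of_le h2pi, intervalIntegral.integral_const_mul,
    aux_cos_integral R s hR hs2 hsp, hlR]
  rw [div_mul_eq_mul_div, ← hs2]
  field_simp
  ring
end

section
/- For the circular tractrix with R=1, the tractrix relation f(t) + (1/ξ₂(t))·f'(t) = (cos t, sin t, 0) holds for all t ≠ 0, so the directrix is the unit circle centered at the origin in the plane x³=0. -/
/-- Tractrix relation for `R = 1`: `f + (1/ξ₂) f' = (cos t, sin t, 0)` for all `t ≠ 0`,
so the directrix is the unit circle in the plane `x³ = 0`. -/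
theorem circular_tractrix_relation_unit_R
    (c₁ c₂ : ℝ) (hc : 4 * (c₁ - 1) = c₂ ^ 2)
    (ξ₁ ξ₂ ξ₃ f1 f2 f3 : ℝ → ℝ)
    (hξ₁ : ∀ t, ξ₁ t = 2 / (c₁ + t ^ 2))
    (hξ₂ : ∀ t, ξ₂ t = 2 * t / (c₁ + t ^ 2))
    (hξ₃ : ∀ t, ξ₃ t = c₂ / (c₁ + t ^ 2))
    (hf1 : ∀ t, f1 t = ξ₁ t * Real.cos t + ξ₂ t * Real.sin t)
    (hf2 : ∀ t, f2 t = -ξ₂ t * Real.cos t + ξ₁ t * Real.sin t)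
    (hf3 : ∀ t, f3 t = ξ₃ t) :
    ∀ t ≠ 0,
      f1 t + (1 / ξ₂ t) * deriv f1 t = Real.cos t ∧
      f2 t + (1 / ξ₂ t) * deriv f2 t = Real.sin t ∧
      f3 t + (1 / ξ₂ t) * deriv f3 t = 0 := by
  have hc1 : (1:ℝ) ≤ c₁ := by nlinarith [sq_nonneg c₂]
  have e1 : f1 = fun t => (2 * Real.cos t + 2 * t * Real.sin t) / (c₁ + t ^ 2) := by
    funext t; rw [hf1, hξ₁, hξ₂]; ring
  have e2 : f2 = fun t => (-(2 * t) * Real.cos t + 2 * Real.sin t) / (c₁ + t ^ 2) := by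
    funext t; rw [hf2, hξ₁, hξ₂]; ring
  have e3 : f3 = fun t => c₂ / (c₁ + t ^ 2) := by
    funext t; rw [hf3, hξ₃]
  intro t ht
  have hD : c₁ + t ^ 2 ≠ 0 := by positivity
  have hv : HasDerivAt (fun t : ℝ => c₁ + t ^ 2) (2 * t) t := by
    simpa using (hasDerivAt_pow 2 t).const_add c₁
  have hu1 : HasDerivAt (fun t : ℝ => 2 * Real.cos t + 2 * t * Real.sin t)
      (2 * (-Real.sin t) + (2 * Real.sin t + 2 * t * Real.cos t)) t := by
    simpa using ((Real.hasDerivAt_cos t).const_mul 2).fun_add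
      (((hasDerivAt_id t).const_mul 2).fun_mul (Real.hasDerivAt_sin t))
  have hu2 : HasDerivAt (fun t : ℝ => -(2 * t) * Real.cos t + 2 * Real.sin t)
      ((-2) * Real.cos t + (-(2 * t)) * (-Real.sin t) + 2 * Real.cos t) t := by
    simpa using ((((hasDerivAt_id t).const_mul 2).fun_neg).fun_mul (Real.hasDerivAt_cos t)).fun_add
      ((Real.hasDerivAt_sin t).const_mul 2)
  have hd1 : deriv f1 t =
      ((2 * (-Real.sin t) + (2 * Real.sin t + 2 * t * Real.cos t)) * (c₁ + t ^ 2)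
        - (2 * Real.cos t + 2 * t * Real.sin t) * (2 * t)) / (c₁ + t ^ 2) ^ 2 := by
    rw [e1]; exact (hu1.div hv hD).deriv
  have hd2 : deriv f2 t =
      (((-2) * Real.cos t + (-(2 * t)) * (-Real.sin t) + 2 * Real.cos t) * (c₁ + t ^ 2)
        - (-(2 * t) * Real.cos t + 2 * Real.sin t) * (2 * t)) / (c₁ + t ^ 2) ^ 2 := by
    rw [e2]; exact (hu2.div hv hD).deriv
  have hd3 : deriv f3 t = (0 * (c₁ + t ^ 2) - c₂ * (2 * t)) / (c₁ + t ^ 2) ^ 2 := by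
    rw [e3]; exact ((hasDerivAt_const t c₂).div hv hD).deriv
  refine ⟨?_, ?_, ?_⟩
  · rw [hd1, hf1, hξ₁, hξ₂]; field_simp; ring
  · rw [hd2, hf2, hξ₁, hξ₂]; field_simp; ring
  · rw [hd3, hf3, hξ₃, hξ₂]; field_simp; ring
end

section
/- For the circular pseudosphere with R=1 (c₁ = 1+α², c₂ = 2α), the first fundamental form equals g = 4/(1+α²+t²)² · (t² dt² + dα²), i.e., |∂f/∂t|² = 4t²/(1+α²+t²)², |∂f/∂α|² = 4/(1+α²+t²)², ⟨∂f/∂t, ∂f/∂α⟩ = 0. -/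
set_option maxHeartbeats 2000000


/-- First fundamental form of the circular pseudosphere with `R = 1`:
`g = 4/(1 + α² + t²)² · (t² dt² + dα²)`. -/
theorem circular_pseudosphere_unit_first_fundamental_form
    (f1 f2 f3 : ℝ → ℝ → ℝ)
    (hf1 : ∀ t α, f1 t α = 2 / (1 + α ^ 2 + t ^ 2) * Real.cos t +
      2 * t / (1 + α ^ 2 + t ^ 2) * Real.sin t)
    (hf2 : ∀ t α, f2 t α = -(2 * t / (1 + α ^ 2 + t ^ 2)) * Real.cos t +
      2 / (1 + α ^ 2 + t ^ 2) * Real.sin t)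
    (hf3 : ∀ t α, f3 t α = 2 * α / (1 + α ^ 2 + t ^ 2)) :
    ∀ t α,
      (deriv (fun s => f1 s α) t) ^ 2 + (deriv (fun s => f2 s α) t) ^ 2 +
          (deriv (fun s => f3 s α) t) ^ 2 = 4 * t ^ 2 / (1 + α ^ 2 + t ^ 2) ^ 2 ∧
      (deriv (fun β => f1 t β) α) ^ 2 + (deriv (fun β => f2 t β) α) ^ 2 +
          (deriv (fun β => f3 t β) α) ^ 2 = 4 / (1 + α ^ 2 + t ^ 2) ^ 2 ∧
      deriv (fun s => f1 s α) t * deriv (fun β => f1 t β) α +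
        deriv (fun s => f2 s α) t * deriv (fun β => f2 t β) α +
        deriv (fun s => f3 s α) t * deriv (fun β => f3 t β) α = 0 := by
  intro t α
  have hpos : ∀ x y : ℝ, (0:ℝ) < 1 + x ^ 2 + y ^ 2 := by intro x y; positivity
  have hne : (1 + α ^ 2 + t ^ 2 : ℝ) ≠ 0 := ne_of_gt (hpos α t)
  -- derivative of the denominator in s
  have hDt : HasDerivAt (fun s : ℝ => 1 + α ^ 2 + s ^ 2) (2 * t) t := by
    simpa using (hasDerivAt_pow 2 t).const_add (1 + α ^ 2)
  have hDa : HasDerivAt (fun β : ℝ => 1 + β ^ 2 + t ^ 2) (2 * α) α := by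
    have h := ((hasDerivAt_pow 2 α).const_add 1).add_const (t ^ 2)
    simpa using h
  have hne' : ∀ s : ℝ, (1 + α ^ 2 + s ^ 2 : ℝ) ≠ 0 := fun s => ne_of_gt (hpos α s)
  have hne'' : ∀ β : ℝ, (1 + β ^ 2 + t ^ 2 : ℝ) ≠ 0 := fun β => ne_of_gt (hpos β t)
  set D : ℝ := 1 + α ^ 2 + t ^ 2 with hD
  -- t-derivatives
  have h1t : HasDerivAt (fun s => 2 / (1 + α ^ 2 + s ^ 2) * Real.cos s +
      2 * s / (1 + α ^ 2 + s ^ 2) * Real.sin s)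
      ((0 * D - 2 * (2 * t)) / D ^ 2 * Real.cos t + 2 / D * (-Real.sin t) +
       ((2 * 1 * D - 2 * t * (2 * t)) / D ^ 2 * Real.sin t + 2 * t / D * Real.cos t)) t := by
    exact (((hasDerivAt_const t (2:ℝ)).div hDt hne).mul (Real.hasDerivAt_cos t)).add
      ((((hasDerivAt_id t).const_mul 2).div hDt hne).mul (Real.hasDerivAt_sin t))
  have h2t : HasDerivAt (fun s => -(2 * s / (1 + α ^ 2 + s ^ 2)) * Real.cos s +
      2 / (1 + α ^ 2 + s ^ 2) * Real.sin s)
      ((-((2 * 1 * D - 2 * t * (2 * t)) / D ^ 2)) * Real.cos t +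
        (-(2 * t / D)) * (-Real.sin t) +
       ((0 * D - 2 * (2 * t)) / D ^ 2 * Real.sin t + 2 / D * Real.cos t)) t := by
    exact (((((hasDerivAt_id t).const_mul 2).div hDt hne).neg).mul (Real.hasDerivAt_cos t)).add
      (((hasDerivAt_const t (2:ℝ)).div hDt hne).mul (Real.hasDerivAt_sin t))
  have h3t : HasDerivAt (fun s => 2 * α / (1 + α ^ 2 + s ^ 2))
      ((0 * D - 2 * α * (2 * t)) / D ^ 2) t :=
    (hasDerivAt_const t (2 * α)).div hDt hne
  -- α-derivatives
  have h1a : HasDerivAt (fun β => 2 / (1 + β ^ 2 + t ^ 2) * Real.cos t +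
      2 * t / (1 + β ^ 2 + t ^ 2) * Real.sin t)
      ((0 * D - 2 * (2 * α)) / D ^ 2 * Real.cos t +
       (0 * D - 2 * t * (2 * α)) / D ^ 2 * Real.sin t) α := by
    exact (((hasDerivAt_const α (2:ℝ)).div hDa hne).mul_const (Real.cos t)).add
      (((hasDerivAt_const α (2 * t)).div hDa hne).mul_const (Real.sin t))
  have h2a : HasDerivAt (fun β => -(2 * t / (1 + β ^ 2 + t ^ 2)) * Real.cos t +
      2 / (1 + β ^ 2 + t ^ 2) * Real.sin t)
      ((-((0 * D - 2 * t * (2 * α)) / D ^ 2)) * Real.cos t +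
       (0 * D - 2 * (2 * α)) / D ^ 2 * Real.sin t) α := by
    exact ((((hasDerivAt_const α (2 * t)).div hDa hne).neg).mul_const (Real.cos t)).add
      (((hasDerivAt_const α (2:ℝ)).div hDa hne).mul_const (Real.sin t))
  have h3a : HasDerivAt (fun β => 2 * β / (1 + β ^ 2 + t ^ 2))
      ((2 * 1 * D - 2 * α * (2 * α)) / D ^ 2) α :=
    ((hasDerivAt_id α).const_mul 2).div hDa hne
  -- rewrite the derivs
  have e1t : deriv (fun s => f1 s α) t = ((0 * D - 2 * (2 * t)) / D ^ 2 * Real.cos t + 2 / D * (-Real.sin t) +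
       ((2 * 1 * D - 2 * t * (2 * t)) / D ^ 2 * Real.sin t + 2 * t / D * Real.cos t)) := by
    rw [show (fun s => f1 s α) = fun s => 2 / (1 + α ^ 2 + s ^ 2) * Real.cos s +
      2 * s / (1 + α ^ 2 + s ^ 2) * Real.sin s from funext fun s => hf1 s α]; exact h1t.deriv
  have e2t : deriv (fun s => f2 s α) t = ((-((2 * 1 * D - 2 * t * (2 * t)) / D ^ 2)) * Real.cos t +
        (-(2 * t / D)) * (-Real.sin t) +
       ((0 * D - 2 * (2 * t)) / D ^ 2 * Real.sin t + 2 / D * Real.cos t)) := by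
    rw [show (fun s => f2 s α) = fun s => -(2 * s / (1 + α ^ 2 + s ^ 2)) * Real.cos s +
      2 / (1 + α ^ 2 + s ^ 2) * Real.sin s from funext fun s => hf2 s α]; exact h2t.deriv
  have e3t : deriv (fun s => f3 s α) t = ((0 * D - 2 * α * (2 * t)) / D ^ 2) := by
    rw [show (fun s => f3 s α) = fun s => 2 * α / (1 + α ^ 2 + s ^ 2) from
      funext fun s => hf3 s α]; exact h3t.deriv
  have e1a : deriv (fun β => f1 t β) α = ((0 * D - 2 * (2 * α)) / D ^ 2 * Real.cos t +
       (0 * D - 2 * t * (2 * α)) / D ^ 2 * Real.sin t) := by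
    rw [show (fun β => f1 t β) = fun β => 2 / (1 + β ^ 2 + t ^ 2) * Real.cos t +
      2 * t / (1 + β ^ 2 + t ^ 2) * Real.sin t from funext fun β => hf1 t β]; exact h1a.deriv
  have e2a : deriv (fun β => f2 t β) α = ((-((0 * D - 2 * t * (2 * α)) / D ^ 2)) * Real.cos t +
       (0 * D - 2 * (2 * α)) / D ^ 2 * Real.sin t) := by
    rw [show (fun β => f2 t β) = fun β => -(2 * t / (1 + β ^ 2 + t ^ 2)) * Real.cos t +
      2 / (1 + β ^ 2 + t ^ 2) * Real.sin t from funext fun β => hf2 t β]; exact h2a.deriv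
  have e3a : deriv (fun β => f3 t β) α = ((2 * 1 * D - 2 * α * (2 * α)) / D ^ 2) := by
    rw [show (fun β => f3 t β) = fun β => 2 * β / (1 + β ^ 2 + t ^ 2) from
      funext fun β => hf3 t β]; exact h3a.deriv
  have hDne : D ≠ 0 := hne
  have hD2 : (D ^ 2 : ℝ) ≠ 0 := pow_ne_zero 2 hDne
  have s1t : deriv (fun s => f1 s α) t =
      2 * t * (Real.cos t * (α ^ 2 + t ^ 2 - 1) - 2 * t * Real.sin t) / D ^ 2 := by
    rw [e1t, hD]; field_simp; ring
  have s2t : deriv (fun s => f2 s α) t =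
      2 * t * (Real.sin t * (α ^ 2 + t ^ 2 - 1) + 2 * t * Real.cos t) / D ^ 2 := by
    rw [e2t, hD]; field_simp; ring
  have s3t : deriv (fun s => f3 s α) t = -(4 * α * t) / D ^ 2 := by
    rw [e3t, hD]; field_simp; ring
  have s1a : deriv (fun β => f1 t β) α =
      -(4 * α * (Real.cos t + t * Real.sin t)) / D ^ 2 := by
    rw [e1a, hD]; field_simp; ring
  have s2a : deriv (fun β => f2 t β) α =
      -(4 * α * (Real.sin t - t * Real.cos t)) / D ^ 2 := by
    rw [e2a, hD]; field_simp; ring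
  have s3a : deriv (fun β => f3 t β) α = 2 * (1 + t ^ 2 - α ^ 2) / D ^ 2 := by
    rw [e3a, hD]; field_simp; ring
  refine ⟨?_, ?_, ?_⟩
  · rw [s1t, s2t, s3t, div_pow, div_pow, div_pow, ← add_div, ← add_div,
      show ((D ^ 2 : ℝ) ^ 2) = (D ^ 2) * (D ^ 2) by ring,
      div_eq_div_iff (mul_ne_zero hD2 hD2) hD2, hD]
    ring_nf
    simp only [Real.sin_sq]
    ring
  · rw [s1a, s2a, s3a, div_pow, div_pow, div_pow, ← add_div, ← add_div,
      show ((D ^ 2 : ℝ) ^ 2) = (D ^ 2) * (D ^ 2) by ring,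
      div_eq_div_iff (mul_ne_zero hD2 hD2) hD2, hD]
    ring_nf
    simp only [Real.sin_sq]
    ring
  · rw [s1t, s2t, s3t, s1a, s2a, s3a, div_mul_div_comm, div_mul_div_comm,
      div_mul_div_comm, ← add_div, ← add_div, div_eq_zero_iff]
    left
    ring_nf
    simp only [Real.sin_sq]
    ring
end

section
/- For 0<R<1, the tractrix relation f(t) + (1/ξ₂(t))·f'(t) = (R cos(t/R), R sin(t/R), 0) holds whenever ξ₂(t) ≠ 0, so the directrix is the circle of radius R centered at the origin in the plane x³=0. -/
set_option maxHeartbeats 1000000 in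
private lemma tractrix_key1 (R lam c₁ s c S C : ℝ) (hR : R ≠ 0) (hl : lam ≠ 0) (hs : s ≠ 0)
    (hD3 : c₁ + c * R ≠ 0) (hl2 : lam ^ 2 * R ^ 2 = 1 - R ^ 2) :
    (R - 1 / R) * c / (c₁ / R + c) * C + -(lam * s) / (c₁ / R + c) * S +
      1 / (-(lam * s) / (c₁ / R + c)) *
        (((R - 1 / R) * (-s * lam) * (c₁ / R + c) - (R - 1 / R) * c * (-s * lam)) / (c₁ / R + c) ^ 2 * C
          + (R - 1 / R) * c / (c₁ / R + c) * (-S * (1 / R))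
          + ((-(lam * (c * lam)) * (c₁ / R + c) - -(lam * s) * (-s * lam)) / (c₁ / R + c) ^ 2 * S
            + -(lam * s) / (c₁ / R + c) * (C * (1 / R)))) = R * C := by
  field_simp [hD3, show c₁ + R * c ≠ 0 by rwa [mul_comm]]
  linear_combination (c * (c₁ + R * c) * S) * hl2

set_option maxHeartbeats 1000000 in
private lemma tractrix_key2 (R lam c₁ s c S C : ℝ) (hR : R ≠ 0) (hl : lam ≠ 0) (hs : s ≠ 0)
    (hD3 : c₁ + c * R ≠ 0) (hl2 : lam ^ 2 * R ^ 2 = 1 - R ^ 2) :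
    -(-(lam * s) / (c₁ / R + c)) * C + (R - 1 / R) * c / (c₁ / R + c) * S +
      1 / (-(lam * s) / (c₁ / R + c)) *
        (-((-(lam * (c * lam)) * (c₁ / R + c) - -(lam * s) * (-s * lam)) / (c₁ / R + c) ^ 2) * C
          + -(-(lam * s) / (c₁ / R + c)) * (-S * (1 / R))
          + (((R - 1 / R) * (-s * lam) * (c₁ / R + c) - (R - 1 / R) * c * (-s * lam)) / (c₁ / R + c) ^ 2 * S
            + (R - 1 / R) * c / (c₁ / R + c) * (C * (1 / R)))) = R * S := by
  field_simp [hD3, show c₁ + R * c ≠ 0 by rwa [mul_comm]]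
  linear_combination (-(c * (c₁ + R * c) * C)) * hl2

set_option maxHeartbeats 1000000 in
private lemma tractrix_key3 (R lam c₁ c₂ s c : ℝ) (hR : R ≠ 0) (hl : lam ≠ 0) (hs : s ≠ 0)
    (hD3 : c₁ + c * R ≠ 0) :
    lam * c₂ / (c₁ / R + c) +
      1 / (-(lam * s) / (c₁ / R + c)) *
        ((0 * (c₁ / R + c) - lam * c₂ * (-s * lam)) / (c₁ / R + c) ^ 2) = 0 := by
  field_simp [hD3]
  ring

set_option maxHeartbeats 1000000 in
/-- Tractrix relation for `0 < R < 1`: `f + (1/ξ₂) f' = (R cos (t/R), R sin (t/R), 0)`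
whenever `ξ₂ t ≠ 0`. -/
theorem circular_tractrix_relation_small_R
    (R c₁ c₂ lam : ℝ) (hR0 : 0 < R) (hR1 : R < 1) (hc : c₁ ^ 2 - c₂ ^ 2 = 1)
    (hlam : lam = Real.sqrt (1 - R ^ 2) / R)
    (ξ₁ ξ₂ ξ₃ f1 f2 f3 : ℝ → ℝ)
    (hξ₁ : ∀ t, ξ₁ t = (R - 1 / R) * Real.cos (lam * t) / (c₁ / R + Real.cos (lam * t)))
    (hξ₂ : ∀ t, ξ₂ t = -(lam * Real.sin (lam * t)) / (c₁ / R + Real.cos (lam * t)))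
    (hξ₃ : ∀ t, ξ₃ t = lam * c₂ / (c₁ / R + Real.cos (lam * t)))
    (hf1 : ∀ t, f1 t = ξ₁ t * Real.cos (t / R) + ξ₂ t * Real.sin (t / R))
    (hf2 : ∀ t, f2 t = -ξ₂ t * Real.cos (t / R) + ξ₁ t * Real.sin (t / R))
    (hf3 : ∀ t, f3 t = ξ₃ t) :
    ∀ t, ξ₂ t ≠ 0 →
      f1 t + (1 / ξ₂ t) * deriv f1 t = R * Real.cos (t / R) ∧
      f2 t + (1 / ξ₂ t) * deriv f2 t = R * Real.sin (t / R) ∧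
      f3 t + (1 / ξ₂ t) * deriv f3 t = 0 := by
  intro t hne
  have hRne : R ≠ 0 := hR0.ne'
  have hlam2 : lam ^ 2 * R ^ 2 = 1 - R ^ 2 := by
    rw [hlam, div_pow, div_mul_cancel₀ _ (by positivity : R ^ 2 ≠ 0)]
    exact Real.sq_sqrt (by nlinarith)
  rw [hξ₂ t] at hne
  have hD : c₁ / R + Real.cos (lam * t) ≠ 0 := by
    intro h; rw [h, div_zero] at hne; exact hne rfl
  have hs : Real.sin (lam * t) ≠ 0 := by
    intro h; rw [h] at hne; simp at hne
  have hlne : lam ≠ 0 := by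
    intro h; rw [h] at hne; simp at hne
  have hD3 : c₁ + Real.cos (lam * t) * R ≠ 0 := by
    intro h; apply hD
    rw [div_add' _ _ _ hRne, div_eq_zero_iff]; left; linarith
  have hid : HasDerivAt (fun x : ℝ => lam * x) lam t := by
    simpa using (hasDerivAt_id t).const_mul lam
  have hcos : HasDerivAt (fun x => Real.cos (lam * x)) (-Real.sin (lam * t) * lam) t :=
    (Real.hasDerivAt_cos (lam * t)).comp t hid
  have hsin : HasDerivAt (fun x => Real.sin (lam * x)) (Real.cos (lam * t) * lam) t :=
    (Real.hasDerivAt_sin (lam * t)).comp t hid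
  have hidR : HasDerivAt (fun x : ℝ => x / R) (1 / R) t := by
    simpa using (hasDerivAt_id t).div_const R
  have hcosR : HasDerivAt (fun x => Real.cos (x / R)) (-Real.sin (t / R) * (1 / R)) t :=
    (Real.hasDerivAt_cos (t / R)).comp (h₂ := Real.cos) t hidR
  have hsinR : HasDerivAt (fun x => Real.sin (x / R)) (Real.cos (t / R) * (1 / R)) t :=
    (Real.hasDerivAt_sin (t / R)).comp (h₂ := Real.sin) t hidR
  have hDd : HasDerivAt (fun x => c₁ / R + Real.cos (lam * x)) (-Real.sin (lam * t) * lam) t := by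
    simpa using hcos
  have hξ₁d : HasDerivAt (fun x => (R - 1 / R) * Real.cos (lam * x) / (c₁ / R + Real.cos (lam * x)))
      (((R - 1 / R) * (-Real.sin (lam * t) * lam) * (c₁ / R + Real.cos (lam * t)) -
        (R - 1 / R) * Real.cos (lam * t) * (-Real.sin (lam * t) * lam)) /
        (c₁ / R + Real.cos (lam * t)) ^ 2) t :=
    (hcos.const_mul (R - 1 / R)).div hDd hD
  have hξ₂d : HasDerivAt (fun x => -(lam * Real.sin (lam * x)) / (c₁ / R + Real.cos (lam * x)))
      ((-(lam * (Real.cos (lam * t) * lam)) * (c₁ / R + Real.cos (lam * t)) -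
        -(lam * Real.sin (lam * t)) * (-Real.sin (lam * t) * lam)) /
        (c₁ / R + Real.cos (lam * t)) ^ 2) t :=
    ((hsin.const_mul lam).neg).div hDd hD
  have hξ₃d : HasDerivAt (fun x => lam * c₂ / (c₁ / R + Real.cos (lam * x)))
      ((0 * (c₁ / R + Real.cos (lam * t)) - lam * c₂ * (-Real.sin (lam * t) * lam)) /
        (c₁ / R + Real.cos (lam * t)) ^ 2) t :=
    (hasDerivAt_const t (lam * c₂)).div hDd hD
  have hf1fun : f1 = fun x => (R - 1 / R) * Real.cos (lam * x) / (c₁ / R + Real.cos (lam * x)) * Real.cos (x / R)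
      + -(lam * Real.sin (lam * x)) / (c₁ / R + Real.cos (lam * x)) * Real.sin (x / R) :=
    funext fun x => by rw [hf1 x, hξ₁ x, hξ₂ x]
  have hf2fun : f2 = fun x => -(-(lam * Real.sin (lam * x)) / (c₁ / R + Real.cos (lam * x))) * Real.cos (x / R)
      + (R - 1 / R) * Real.cos (lam * x) / (c₁ / R + Real.cos (lam * x)) * Real.sin (x / R) :=
    funext fun x => by rw [hf2 x, hξ₁ x, hξ₂ x]
  have hf3fun : f3 = fun x => lam * c₂ / (c₁ / R + Real.cos (lam * x)) :=
    funext fun x => by rw [hf3 x, hξ₃ x]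
  have hd1 := ((hξ₁d.fun_mul hcosR).fun_add (hξ₂d.fun_mul hsinR)).deriv
  have hd2 := ((hξ₂d.fun_neg.fun_mul hcosR).fun_add (hξ₁d.fun_mul hsinR)).deriv
  have hd3 := hξ₃d.deriv
  rw [← hf1fun] at hd1
  rw [show (fun x => -(-(lam * Real.sin (lam * x)) / (c₁ / R + Real.cos (lam * x))) * Real.cos (x / R)
      + (R - 1 / R) * Real.cos (lam * x) / (c₁ / R + Real.cos (lam * x)) * Real.sin (x / R)) = f2 from hf2fun.symm] at hd2
  rw [← hf3fun] at hd3
  refine ⟨?_, ?_, ?_⟩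
  · rw [hd1, hf1 t, hξ₁ t, hξ₂ t]
    exact tractrix_key1 R lam c₁ (Real.sin (lam * t)) (Real.cos (lam * t))
      (Real.sin (t / R)) (Real.cos (t / R)) hRne hlne hs hD3 hlam2
  · rw [hd2, hf2 t, hξ₁ t, hξ₂ t]
    exact tractrix_key2 R lam c₁ (Real.sin (lam * t)) (Real.cos (lam * t))
      (Real.sin (t / R)) (Real.cos (t / R)) hRne hlne hs hD3 hlam2
  · rw [hd3, hf3 t, hξ₃ t, hξ₂ t]
    exact tractrix_key3 R lam c₁ c₂ (Real.sin (lam * t)) (Real.cos (lam * t)) hRne hlne hs hD3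
end
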